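/- In F_q[x], E_{m-1}(x) = ∏_{a} (x - a), where the product is over all a ∈ F_q such that both 2 - a and 2 + a are nonzero squares in F_q, and E_{m-1} denotes the image in F_q[x] of the (m-1)-st Dickson polynomial of the second kind. -/

import Mathlib

open scoped Classical
open Polynomial

/-- The Dickson polynomials of the second kind: `E 0 = 1`, `E 1 = X`,
`E (k+2) = X * E (k+1) - E k`. -/
noncomputable def dicksonSnd : ℕ → Polynomial ℤ
  | 0 => 1
  | 1 => Polynomial.X
  | (k + 2) => Polynomial.X * dicksonSnd (k + 1) - dicksonSnd k

/-! If `2 + a = s²` and `2 - a = t²` with `s, t ≠ 0`, put `u = (s + i t)/2` and `v = (s - i t)/2`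
in an algebraic closure, where `i² = -1`. Then `u v = 1` and `u² + v² = a`. The Frobenius `x ↦ x^q`
fixes `u` when `ε = 1` and sends it to `v = u⁻¹` when `ε = -1`, so `u^(q - ε) = u^(4m) = 1`.
For `z = u²` and `w = v²` this gives `z^m = w^m`, and since
`(z - w) E_{m-1}(z + w) = z^m - w^m` with `z - w = i s t ≠ 0`, `a` is a root of `E_{m-1}`.

There are exactly `m - 1` such `a`: with `χ` the quadratic character,
`∑_a (1 + χ(2 - a))(1 + χ(2 + a)) = q + J(χ, χ) = q - ε`, while the terms `a ≠ ±2` contribute `4`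
for each admissible `a` and `0` otherwise, and `a = ±2` contribute `2` each. As `E_{m-1}` is monic
of degree `m - 1`, it is the product of the `X - a`. -/

theorem dicksonSnd_add_two (k : ℕ) :
    dicksonSnd (k + 2) = X * dicksonSnd (k + 1) - dicksonSnd k :=
  rfl

theorem monic_dicksonSnd_and_natDegree (k : ℕ) :
    (dicksonSnd k).Monic ∧ (dicksonSnd k).natDegree = k := by
  induction k using Nat.twoStepInduction with
  | zero => exact ⟨monic_one, natDegree_one⟩
  | one => exact ⟨monic_X, natDegree_X⟩
  | more k ih₀ ih₁ =>
    obtain ⟨hmonic, hdeg⟩ := ih₁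
    have hXmonic : (X * dicksonSnd (k + 1)).Monic := monic_X.mul hmonic
    have hXdeg : (X * dicksonSnd (k + 1)).natDegree = k + 2 := by
      rw [monic_X.natDegree_mul hmonic, natDegree_X, hdeg, add_comm]
    have hlt : (dicksonSnd k).natDegree < (X * dicksonSnd (k + 1)).natDegree := by
      rw [ih₀.2, hXdeg]; omega
    rw [dicksonSnd_add_two]
    exact ⟨hXmonic.sub_of_left (degree_lt_degree hlt),
      (natDegree_sub_eq_left_of_natDegree_lt hlt).trans hXdeg⟩

theorem sub_mul_aeval_dicksonSnd {R : Type*} [CommRing R] {z w : R} (h : z * w = 1) (k : ℕ) :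
    (z - w) * aeval (z + w) (dicksonSnd k) = z ^ (k + 1) - w ^ (k + 1) := by
  induction k using Nat.twoStepInduction with
  | zero => simp [dicksonSnd]
  | one => simp only [dicksonSnd, aeval_X]; ring
  | more k ih₀ ih₁ =>
    rw [dicksonSnd_add_two, map_sub, map_mul, aeval_X]
    linear_combination (z + w) * ih₁ - ih₀ + (z ^ (k + 1) - w ^ (k + 1)) * h

theorem aeval_dicksonSnd_add_eq_zero {R : Type*} [CommRing R] [NoZeroDivisors R] {z w : R}
    (h : z * w = 1) (hne : z ≠ w) {m : ℕ} (hm : 0 < m) (hpow : z ^ m = w ^ m) :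
    aeval (z + w) (dicksonSnd (m - 1)) = 0 := by
  have key := sub_mul_aeval_dicksonSnd h (m - 1)
  rw [Nat.sub_add_cancel hm, hpow, sub_self] at key
  exact (mul_eq_zero.1 key).resolve_left (sub_ne_zero.2 hne)

theorem eq_prod_X_sub_C_of_monic_of_isRoot {R : Type*} [CommRing R] [IsDomain R] {p : R[X]}
    {s : Finset R} (hp : p.Monic) (hdeg : p.natDegree = s.card) (hroot : ∀ a ∈ s, p.IsRoot a) :
    p = ∏ a ∈ s, (X - C a) := by
  have hle : s.val ≤ p.roots :=
    Finset.val_le_iff_val_subset.2 fun a ha => (mem_roots hp.ne_zero).2 (hroot a ha)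
  have hroots : p.roots = s.val :=
    (Multiset.eq_of_le_of_card_le hle ((card_roots' p).trans hdeg.le)).symm
  conv_lhs => rw [← prod_multiset_X_sub_C_of_monic_of_roots_card_eq hp (by rw [hroots, hdeg]; rfl)]
  rw [hroots]
  rfl

theorem pow_eq_neg_one_pow_mul_of_sq_eq_neg_one {R : Type*} [Monoid R] [HasDistribNeg R] {i : R}
    (hi : i ^ 2 = -1) {n : ℕ} (hn : Odd n) : i ^ n = (-1) ^ ((n - 1) / 2) * i := by
  obtain ⟨k, rfl⟩ := hn
  rw [show (2 * k + 1 - 1) / 2 = k by omega, pow_succ, pow_mul, hi]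

theorem half_add_mul_half_sub {K : Type*} [Field K] (h2 : (2 : K) ≠ 0) {i S T : K}
    (hi : i ^ 2 = -1) (hST : S * S + T * T = 4) : (S + i * T) / 2 * ((S - i * T) / 2) = 1 := by
  field_simp
  linear_combination hST - T ^ 2 * hi

section FiniteField

variable {F : Type*} [Field F] [Fintype F]

theorem ringChar_ne_two_of_odd_card (hq : Odd (Fintype.card F)) : ringChar F ≠ 2 := fun h => by
  have := FiniteField.even_card_iff_char_two.1 h
  have := Nat.odd_iff.1 hq
  omega

theorem one_add_quadraticChar_of_ne_zero {x : F} (hx : x ≠ 0) :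
    1 + quadraticChar F x = if IsSquare x then 2 else 0 := by
  split_ifs with h
  · rw [(quadraticChar_one_iff_isSquare hx).2 h]; rfl
  · rw [quadraticChar_neg_one_iff_not_isSquare.2 h]; rfl

theorem sum_quadraticChar_sub_mul_add (hF : ringChar F ≠ 2) {c : F} (hc : c ≠ 0) :
    ∑ a, quadraticChar F ((c - a) * (c + a)) = -quadraticChar F (-1) := by
  have h2c : 2 * c ≠ 0 := mul_ne_zero (Ring.two_ne_zero hF) hc
  have hJ := jacobiSum_nontrivial_inv (quadraticChar_ne_one hF)
  rw [(quadraticChar_isQuadratic F).inv] at hJ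
  -- substituting `a = c - 2cb` turns `(c - a)(c + a)` into `(2c)² b (1 - b)`
  let e : F ≃ F := (Equiv.mulLeft₀ (2 * c) h2c).trans (Equiv.subLeft c)
  rw [← hJ, jacobiSum, ← e.sum_comp]
  refine Fintype.sum_congr _ _ fun b => ?_
  rw [show (c - e b) * (c + e b) = (2 * c) ^ 2 * (b * (1 - b)) by simp [e]; ring, map_mul,
    quadraticChar_sq_one' h2c, one_mul, map_mul]

theorem quadraticChar_neg_one_eq_neg_one_pow (hq : Odd (Fintype.card F)) :
    quadraticChar F (-1) = (-1) ^ ((Fintype.card F - 1) / 2) := by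
  have hq' := Nat.odd_iff.1 hq
  rw [quadraticChar_neg_one (ringChar_ne_two_of_odd_card hq), ZMod.χ₄_eq_neg_one_pow hq']
  congr 1
  omega

theorem four_mul_card_filter_isSquare_add_four (hF : ringChar F ≠ 2) :
    4 * ((Finset.univ.filter
        (fun a : F => (IsSquare (2 - a) ∧ 2 - a ≠ 0) ∧ (IsSquare (2 + a) ∧ 2 + a ≠ 0))).card : ℤ)
      + 4 = Fintype.card F - quadraticChar F (-1) := by
  set P := Finset.univ.filter
    (fun a : F => (IsSquare (2 - a) ∧ 2 - a ≠ 0) ∧ (IsSquare (2 + a) ∧ 2 + a ≠ 0))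
  set χ := quadraticChar F
  have h2 : (2 : F) ≠ 0 := Ring.two_ne_zero hF
  have h22 : (2 : F) ≠ -2 := by
    rw [ne_eq, eq_neg_iff_add_eq_zero, ← two_mul]; exact mul_ne_zero h2 h2
  have hχ4 : χ (2 + 2) = 1 := by
    rw [show (2 : F) + 2 = 2 ^ 2 by ring]; exact quadraticChar_sq_one' h2
  have hsum : ∑ a, (1 + χ (2 - a)) * (1 + χ (2 + a)) = Fintype.card F - χ (-1) := by
    have hsub : ∑ a, χ (2 - a) = 0 :=
      (Equiv.sum_comp (Equiv.subLeft (2 : F)) χ).trans (quadraticChar_sum_zero hF)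
    have hadd : ∑ a, χ (2 + a) = 0 :=
      (Equiv.sum_comp (Equiv.addLeft (2 : F)) χ).trans (quadraticChar_sum_zero hF)
    calc ∑ a, (1 + χ (2 - a)) * (1 + χ (2 + a))
        = ∑ a, (1 + χ (2 - a) + χ (2 + a) + χ ((2 - a) * (2 + a))) :=
          Fintype.sum_congr _ _ fun a => by rw [map_mul]; ring
      _ = Fintype.card F + ∑ a, χ (2 - a) + ∑ a, χ (2 + a) + ∑ a, χ ((2 - a) * (2 + a)) := by
          simp only [Finset.sum_add_distrib, Finset.sum_const, Finset.card_univ, nsmul_one]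
      _ = Fintype.card F - χ (-1) := by
          rw [hsub, hadd, sum_quadraticChar_sub_mul_add hF h2]; ring
  have hpoint : ∀ a, (1 + χ (2 - a)) * (1 + χ (2 + a)) =
      4 * (if a ∈ P then 1 else 0) + (if a = 2 then 2 else 0) + (if a = -2 then 2 else 0) := by
    intro a
    by_cases ha : a = 2
    · subst ha
      simp [P, hχ4, χ, h22]
    by_cases ha' : a = -2
    · subst ha'
      simp [P, hχ4, χ, h22.symm]
    have h₁ : 2 - a ≠ 0 := sub_ne_zero.2 (Ne.symm ha)
    have h₂ : 2 + a ≠ 0 := fun h => ha' (by linear_combination h)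
    rw [one_add_quadraticChar_of_ne_zero h₁, one_add_quadraticChar_of_ne_zero h₂, if_neg ha,
      if_neg ha']
    simp only [P, Finset.mem_filter, Finset.mem_univ, true_and]
    split_ifs <;> tauto
  rw [← hsum, Fintype.sum_congr _ _ hpoint]
  simp only [mul_ite, mul_one, mul_zero, Finset.sum_add_distrib, Finset.sum_ite_mem,
    Finset.univ_inter, Finset.sum_const, Int.nsmul_eq_mul, Finset.sum_ite_eq', Finset.mem_univ,
    if_true]
  ring

theorem half_add_pow_four_mul_eq_one {K : Type*} [Field K] [Algebra F K]
    (hq : Odd (Fintype.card F)) {m : ℕ}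
    (hm : 4 * (m : ℤ) = (Fintype.card F : ℤ) - (-1) ^ ((Fintype.card F - 1) / 2))
    (h2 : (2 : K) ≠ 0) {i : K} (hi : i ^ 2 = -1) {s t : F} (hst : s * s + t * t = 4) :
    ((algebraMap F K s + i * algebraMap F K t) / 2) ^ (4 * m) = 1 := by
  set q := Fintype.card F
  set S := algebraMap F K s
  set T := algebraMap F K t
  have hST : S * S + T * T = 4 := by simp only [S, T, ← map_mul, ← map_add, hst, map_ofNat]
  have huv := half_add_mul_half_sub h2 hi hST
  set u := (S + i * T) / 2
  have hfrob : u ^ q = (S + (-1) ^ ((q - 1) / 2) * i * T) / 2 := by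
    calc u ^ q = FiniteField.frobeniusAlgHom F K u := rfl
      _ = (S + i ^ q * T) / 2 := by
        simp only [u, S, T, map_div₀, map_add, map_mul, AlgHom.commutes, map_ofNat,
          FiniteField.coe_frobeniusAlgHom]
        rfl
      _ = _ := by rw [pow_eq_neg_one_pow_mul_of_sq_eq_neg_one hi hq]
  rcases Nat.even_or_odd ((q - 1) / 2) with hε | hε
  · rw [hε.neg_one_pow, one_mul] at hfrob
    rw [hε.neg_one_pow] at hm
    have hq' : 4 * m + 1 = q := by omega
    apply mul_right_cancel₀ (left_ne_zero_of_mul_eq_one huv)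
    rw [← pow_succ, hq', hfrob, one_mul]
  · rw [hε.neg_one_pow, neg_one_mul, neg_mul, ← sub_eq_add_neg] at hfrob
    rw [hε.neg_one_pow] at hm
    have hq' : 4 * m = q + 1 := by omega
    rw [hq', pow_succ, hfrob, mul_comm, huv]

theorem aeval_dicksonSnd_eq_zero (hq : Odd (Fintype.card F)) {m : ℕ} (hm0 : 0 < m)
    (hm : 4 * (m : ℤ) = (Fintype.card F : ℤ) - (-1) ^ ((Fintype.card F - 1) / 2))
    {a s t : F} (hs : 2 + a = s * s) (ht : 2 - a = t * t) (hs0 : s ≠ 0) (ht0 : t ≠ 0) :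
    aeval a (dicksonSnd (m - 1)) = 0 := by
  obtain ⟨i, hi⟩ := IsAlgClosed.exists_pow_nat_eq (-1 : AlgebraicClosure F) two_pos
  set ι := algebraMap F (AlgebraicClosure F)
  have h2 : (2 : AlgebraicClosure F) ≠ 0 := by
    rw [← map_ofNat ι 2]
    exact (map_ne_zero_iff ι ι.injective).2 (Ring.two_ne_zero (ringChar_ne_two_of_odd_card hq))
  have hst : s * s + t * t = 4 := by linear_combination -hs - ht
  have hu := half_add_pow_four_mul_eq_one hq hm h2 hi hst
  have hST : ι s * ι s + ι t * ι t = 4 := by simp only [← map_mul, ← map_add, hst, map_ofNat]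
  have huv := half_add_mul_half_sub h2 hi hST
  set u := (ι s + i * ι t) / 2
  set v := (ι s - i * ι t) / 2
  have hsum : u ^ 2 + v ^ 2 = ι a := by
    have hS : ι s * ι s = 2 + ι a := by simp only [← map_mul, ← hs, map_add, map_ofNat]
    have hT : ι t * ι t = 2 - ι a := by simp only [← map_mul, ← ht, map_sub, map_ofNat]
    simp only [u, v]
    field_simp
    linear_combination 2 * hS - 2 * hT + 2 * ι t ^ 2 * hi
  have hne : u ^ 2 ≠ v ^ 2 := by
    have hi0 : i ≠ 0 := by rintro rfl; norm_num at hi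
    rw [← sub_ne_zero, show u ^ 2 - v ^ 2 = i * ι s * ι t by simp only [u, v]; field_simp; ring]
    exact mul_ne_zero (mul_ne_zero hi0 ((map_ne_zero_iff ι ι.injective).2 hs0))
      ((map_ne_zero_iff ι ι.injective).2 ht0)
  have hpow : (u ^ 2) ^ m = (v ^ 2) ^ m := by
    have h1 : (u ^ 2) ^ m * (v ^ 2) ^ m = 1 := by rw [← mul_pow, ← mul_pow, huv, one_pow, one_pow]
    have h2 : (u ^ 2) ^ m * (u ^ 2) ^ m = 1 := by rw [← pow_add, ← pow_mul, ← hu]; ring_nf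
    exact (eq_inv_of_mul_eq_one_left h2).trans (eq_inv_of_mul_eq_one_right h1).symm
  have key := aeval_dicksonSnd_add_eq_zero (by rw [← mul_pow, huv, one_pow]) hne hm0 hpow
  rw [hsum, aeval_algebraMap_apply] at key
  exact (map_eq_zero_iff ι ι.injective).1 key

end FiniteField

/-- With `ε = (-1)^((q-1)/2)` and `m = (q - ε)/4` (a positive integer),
in `F_q[x]` we have `E_{m-1}(x) = ∏ (x - a)`, the product over all `a ∈ F_q` such that
both `2 - a` and `2 + a` are nonzero squares in `F_q`. -/
theorem dickson_snd_factorization {F : Type*} [Field F] [Fintype F]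
    (hq : Odd (Fintype.card F)) (m : ℕ) (hm0 : 0 < m)
    (hm : 4 * (m : ℤ) = (Fintype.card F : ℤ) - (-1) ^ ((Fintype.card F - 1) / 2)) :
    (dicksonSnd (m - 1)).map (Int.castRingHom F) =
      ∏ a ∈ Finset.univ.filter
          (fun a : F => (IsSquare (2 - a) ∧ 2 - a ≠ 0) ∧ (IsSquare (2 + a) ∧ 2 + a ≠ 0)),
        (Polynomial.X - Polynomial.C a) := by
  obtain ⟨hmonic, hdeg⟩ := monic_dicksonSnd_and_natDegree (m - 1)
  have hcard := four_mul_card_filter_isSquare_add_four (ringChar_ne_two_of_odd_card hq)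
  rw [quadraticChar_neg_one_eq_neg_one_pow hq, ← hm] at hcard
  refine eq_prod_X_sub_C_of_monic_of_isRoot (hmonic.map _) ?_ fun a ha => ?_
  · rw [hmonic.natDegree_map, hdeg]
    omega
  · obtain ⟨-, ⟨⟨t, ht⟩, ht0⟩, ⟨s, hs⟩, hs0⟩ := Finset.mem_filter.1 ha
    rw [IsRoot.def, eval_map, ← algebraMap_int_eq, ← aeval_def]
    exact aeval_dicksonSnd_eq_zero hq hm0 hm hs ht (left_ne_zero_of_mul (hs ▸ hs0))
      (left_ne_zero_of_mul (ht ▸ ht0))
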